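/- arXiv:2311.15718 — 2 statements merged into one kernel-verified Lean document; each statement's English description precedes it below -/
import Mathlib

section
/- If S : ℝ → ℝ is differentiable, satisfies dS/dt = -βS(t)I(t) - αS(t) + μ - μS(t) with I continuous, μ > 0 and S(0) ≥ 0, then S(t) ≥ 0 for all t ≥ 0. -/
/-- If S solves dS/dt = -βSI - αS + μ - μS with I continuous, μ > 0 and S(0) ≥ 0,
then S(t) ≥ 0 for all t ≥ 0. -/
theorem svir_susceptible_nonneg
    (S I : ℝ → ℝ) (β α μ : ℝ)
    (hβ : 0 < β) (hα : 0 ≤ α) (hμ : 0 < μ)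
    (hI : Continuous I)
    (hS : Differentiable ℝ S)
    (hSode : ∀ t, deriv S t = -β * S t * I t - α * S t + μ - μ * S t)
    (hS0 : 0 ≤ S 0) :
    ∀ t : ℝ, 0 ≤ t → 0 ≤ S t := by
  intro t ht
  by_contra hneg
  push_neg at hneg
  have hScont : Continuous S := hS.continuous
  have ht0 : 0 < t := by
    rcases eq_or_lt_of_le ht with h | h
    · exfalso; rw [← h] at hneg; linarith
    · exact h
  set A : Set ℝ := {s : ℝ | s ∈ Set.Icc 0 t ∧ 0 ≤ S s} with hA
  have hA0 : (0:ℝ) ∈ A := ⟨⟨le_refl 0, le_of_lt ht0⟩, hS0⟩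
  have hAne : A.Nonempty := ⟨0, hA0⟩
  have hAbdd : BddAbove A := ⟨t, fun s hs => hs.1.2⟩
  set τ := sSup A with hτ
  have hτle : τ ≤ t := csSup_le hAne (fun s hs => hs.1.2)
  have hτ0 : 0 ≤ τ := le_csSup hAbdd hA0
  have hSτ_nonneg : 0 ≤ S τ := by
    have hmem : τ ∈ closure A := csSup_mem_closure hAne hAbdd
    have hclosed : IsClosed A := by
      apply IsClosed.inter isClosed_Icc (isClosed_le continuous_const hScont)
    exact (hclosed.closure_subset hmem).2
  have hτlt : τ < t := by
    rcases eq_or_lt_of_le hτle with h | h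
    · exfalso; rw [h] at hSτ_nonneg; linarith
    · exact h
  have hneg' : ∀ s, τ < s → s ≤ t → S s < 0 := by
    intro s hs hst
    by_contra h; push_neg at h
    exact absurd (le_csSup hAbdd ⟨⟨le_trans hτ0 hs.le, hst⟩, h⟩) (not_le.2 hs)
  -- S τ ≤ 0 from right continuity
  have hSτ : S τ = 0 := by
    refine le_antisymm ?_ hSτ_nonneg
    have htend : Filter.Tendsto S (nhdsWithin τ (Set.Ioi τ)) (nhds (S τ)) :=
      (hScont.continuousAt.tendsto).mono_left nhdsWithin_le_nhds
    refine le_of_tendsto htend ?_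
    filter_upwards [Ioo_mem_nhdsGT_of_mem (Set.left_mem_Ico.2 hτlt)] with s hs
    exact (hneg' s hs.1 hs.2.le).le
  -- derivative at τ is μ
  have hderiv : HasDerivAt S μ τ := by
    have := hS.differentiableAt (x := τ) |>.hasDerivAt
    have heq : deriv S τ = μ := by rw [hSode τ, hSτ]; ring
    rwa [heq] at this
  -- slope tends to μ > 0 along 𝓝[>] τ
  have hslope : Filter.Tendsto (slope S τ) (nhdsWithin τ (Set.Ioi τ)) (nhds μ) :=
    ((hasDerivAt_iff_tendsto_slope.1 hderiv).mono_left
      (nhdsWithin_mono τ (fun x hx => ne_of_gt hx)))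
  have hev : ∀ᶠ s in nhdsWithin τ (Set.Ioi τ), 0 < slope S τ s :=
    hslope.eventually (eventually_gt_nhds hμ)
  have hev2 : ∀ᶠ s in nhdsWithin τ (Set.Ioi τ), S s < 0 := by
    filter_upwards [Ioo_mem_nhdsGT_of_mem (Set.left_mem_Ico.2 hτlt),
      self_mem_nhdsWithin] with s hs hs'
    exact hneg' s hs.1 hs.2.le
  obtain ⟨s, hs1, hs2⟩ := ((hev.and hev2).and self_mem_nhdsWithin).exists
  obtain ⟨hpos, hsneg⟩ := hs1
  rw [slope_def_field, div_pos_iff] at hpos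
  have hsτ : τ < s := hs2
  rcases hpos with ⟨h1, h2⟩ | ⟨h1, h2⟩
  · rw [hSτ] at h1; linarith
  · linarith
end

section
/- If S, V, I solve the reduced controlled SVIR system with measurable controls u₀(t) ∈ [0,1], u₁(t) ∈ [0,1], nonnegative initial data with S₀+V₀+I₀ ≤ 1, then S(t)+V(t)+I(t) ≤ 1 for all t ≥ 0. -/
/-! The total population `N = S + V + I` satisfies `N' = μ (1 - N) - γ₁ V - γ I ≤ μ (1 - N)`, since
the infection terms cancel in the sum. Multiplying by the integrating factor `exp (μ t)` turns this
into the statement that `(N - 1) exp (μ t)` is nonincreasing, so `N - 1` keeps the sign it has at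
`t = 0`. -/

open Real Set

theorem le_of_hasDerivAt_le_mul_sub {f f' : ℝ → ℝ} {μ c a : ℝ}
    (hf : ∀ t, HasDerivAt f (f' t) t) (hf' : ∀ t, a ≤ t → f' t ≤ μ * (c - f t))
    (ha : f a ≤ c) {t : ℝ} (ht : a ≤ t) : f t ≤ c := by
  set g : ℝ → ℝ := fun s => (f s - c) * exp (μ * s)
  have hg : ∀ s, HasDerivAt g ((f' s + μ * (f s - c)) * exp (μ * s)) s := fun s => by
    have hexp : HasDerivAt (fun s => exp (μ * s)) (exp (μ * s) * μ) s :=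
      ((hasDerivAt_id s).const_mul μ).exp.congr_deriv (by simp)
    exact ((hf s).sub_const c).mul hexp |>.congr_deriv (by ring)
  have hg_anti : AntitoneOn g (Ici a) := by
    refine antitoneOn_of_hasDerivWithinAt_nonpos (convex_Ici a)
      (fun s _ => (hg s).continuousAt.continuousWithinAt) (fun s _ => (hg s).hasDerivWithinAt)
      fun s hs => ?_
    rw [interior_Ici] at hs
    have hf's : f' s + μ * (f s - c) ≤ 0 := by linarith [hf' s hs.le]
    exact mul_nonpos_of_nonpos_of_nonneg hf's (exp_pos _).le
  have hgt : (f t - c) * exp (μ * t) ≤ 0 :=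
    calc g t ≤ g a := hg_anti self_mem_Ici ht ht
      _ ≤ 0 := mul_nonpos_of_nonpos_of_nonneg (sub_nonpos.2 ha) (exp_pos _).le
  exact sub_nonpos.1 (nonpos_of_mul_nonpos_left hgt (exp_pos _))

theorem svir_sum_le_one_general
    (S V I u₀ u₁ : ℝ → ℝ) (β₀ γ γ₁ μ ε : ℝ)
    (hγ : 0 < γ) (hγ₁ : 0 < γ₁)
    (hVpos : ∀ t, 0 ≤ V t) (hIpos : ∀ t, 0 ≤ I t)
    (hS : Differentiable ℝ S) (hV : Differentiable ℝ V) (hI : Differentiable ℝ I)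
    (hSode : ∀ t, deriv S t =
      -(β₀ * (1 - u₀ t)) * S t * I t - u₁ t * S t + μ - μ * S t)
    (hVode : ∀ t, deriv V t =
      u₁ t * S t - ε * (β₀ * (1 - u₀ t)) * V t * I t - γ₁ * V t - μ * V t)
    (hIode : ∀ t, deriv I t =
      β₀ * (1 - u₀ t) * S t * I t + ε * (β₀ * (1 - u₀ t)) * V t * I t
        - (γ + μ) * I t)
    (hinit : S 0 + V 0 + I 0 ≤ 1) :
    ∀ t : ℝ, 0 ≤ t → S t + V t + I t ≤ 1 := by
  have hN : ∀ t, HasDerivAt (fun s => S s + V s + I s)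
      (μ * (1 - (S t + V t + I t)) - γ₁ * V t - γ * I t) t := fun t => by
    refine ((hS t).hasDerivAt.add (hV t).hasDerivAt).add (hI t).hasDerivAt |>.congr_deriv ?_
    rw [hSode, hVode, hIode]
    ring
  intro t ht
  refine le_of_hasDerivAt_le_mul_sub (μ := μ) hN (fun s _ => ?_) hinit ht
  linarith [mul_nonneg hγ₁.le (hVpos s), mul_nonneg hγ.le (hIpos s)]

/-- For the reduced controlled SVIR system with admissible controls and
nonnegative solutions, if S(0)+V(0)+I(0) ≤ 1 then S(t)+V(t)+I(t) ≤ 1 for all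
t ≥ 0. -/
theorem svir_sum_le_one
    (S V I u₀ u₁ : ℝ → ℝ) (β₀ γ γ₁ μ ε : ℝ)
    (hβ₀ : 0 < β₀) (hγ : 0 < γ) (hγ₁ : 0 < γ₁) (hμ : 0 < μ)
    (hε0 : 0 ≤ ε) (hε1 : ε ≤ 1)
    (hu₀meas : Measurable u₀) (hu₁meas : Measurable u₁)
    (hu₀ : ∀ t, u₀ t ∈ Set.Icc (0:ℝ) 1) (hu₁ : ∀ t, u₁ t ∈ Set.Icc (0:ℝ) 1)
    (hSpos : ∀ t, 0 ≤ S t) (hVpos : ∀ t, 0 ≤ V t) (hIpos : ∀ t, 0 ≤ I t)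
    (hS : Differentiable ℝ S) (hV : Differentiable ℝ V) (hI : Differentiable ℝ I)
    (hSode : ∀ t, deriv S t =
      -(β₀ * (1 - u₀ t)) * S t * I t - u₁ t * S t + μ - μ * S t)
    (hVode : ∀ t, deriv V t =
      u₁ t * S t - ε * (β₀ * (1 - u₀ t)) * V t * I t - γ₁ * V t - μ * V t)
    (hIode : ∀ t, deriv I t =
      β₀ * (1 - u₀ t) * S t * I t + ε * (β₀ * (1 - u₀ t)) * V t * I t
        - (γ + μ) * I t)
    (hinit : S 0 + V 0 + I 0 ≤ 1) :
    ∀ t : ℝ, 0 ≤ t → S t + V t + I t ≤ 1 :=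
  svir_sum_le_one_general S V I u₀ u₁ β₀ γ γ₁ μ ε hγ hγ₁ hVpos hIpos hS hV hI hSode hVode hIode
    hinit
end
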